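/- Let n ≥ 2, let L be a real symmetric positive semidefinite n×n matrix with eigenvalues 0 = λ₁ ≤ λ₂ ≤ … ≤ λₙ, λ₂ > 0, and orthonormal eigenvectors v₁, …, vₙ where v₁ = (1/√n)·1ₙ; let α > 0, hᵢ = 1/(1 + αλᵢ), qᵢ = 1 − hᵢ, and σᵢ ≥ 0. Suppose the ground-truth signal x* is random with mean μ·1ₙ (for some μ ∈ ℝ) and covariance diag(s₁², …, sₙ²), sⱼ ≥ 0. Then the expected MSE satisfies E[Σᵢ₌₂ⁿ qᵢ² (vᵢᵀ(x* − ((1ₙᵀx*)/n)·1ₙ))²] + Σᵢ₌₁ⁿ hᵢ² σᵢ² ≤ (1/(1 + 1/(αλₙ)))² · (n − 1)·s̄ + (1/(1 + αλ₂))² · (n − 1)·σ̄ + σ₁², where s̄ = (Σⱼ₌₁ⁿ sⱼ²)/n and σ̄ = (Σᵢ₌₂ⁿ σᵢ²)/(n − 1); in particular the mean μ·1ₙ of the random signal does not appear in the bound. -/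

import Mathlib

/-!
For `i ≠ 0` the eigenvector `vᵢ` is orthogonal to `v₀ ∝ 1ₙ`, so `vᵢᵀ` kills every multiple of
`1ₙ`: both the empirical mean and the true mean `μ` drop out, and the diagonal covariance gives
`E[(vᵢᵀ(x* - μ1ₙ))²] = ∑ⱼ vᵢⱼ² sⱼ²`. Bounding `qᵢ` by its value at the largest eigenvalue and
using `∑_{i ≠ 0} vᵢⱼ² = 1 - 1/n` (the columns of an orthogonal matrix are unit vectors) bounds the
signal term; the noise term uses `h₀ = 1` and `hᵢ ≤ h₁` for `i ≠ 0`.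
-/

open Matrix MeasureTheory

theorem sum_mul_of_orthonormal_rows {ι : Type*} [Fintype ι] [DecidableEq ι] {v : ι → ι → ℝ}
    (horth : ∀ i j, v i ⬝ᵥ v j = if i = j then (1 : ℝ) else 0) (j k : ι) :
    ∑ i, v i j * v i k = if j = k then (1 : ℝ) else 0 := by
  have hrows : Matrix.of v * (Matrix.of v)ᵀ = 1 := by
    ext i j
    simp [Matrix.mul_apply, Matrix.one_apply, ← horth i j, dotProduct]
  have hcols : (Matrix.of v)ᵀ * Matrix.of v = 1 := mul_eq_one_comm.mp hrows
  simpa [Matrix.mul_apply, Matrix.one_apply] using congrFun₂ hcols j k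

theorem sum_eq_zero_of_dotProduct_const_eq_zero {ι : Type*} [Fintype ι] {w : ι → ℝ} {c : ℝ}
    (hc : c ≠ 0) (hw : w ⬝ᵥ (fun _ => c) = 0) : ∑ j, w j = 0 := by
  simpa [dotProduct, ← Finset.sum_mul, hc] using hw

theorem dotProduct_sub_smul_one_of_sum_eq_zero {ι : Type*} [Fintype ι] {w : ι → ℝ}
    (hw : ∑ j, w j = 0) (x : ι → ℝ) (c : ℝ) :
    w ⬝ᵥ (x - c • fun _ => (1 : ℝ)) = w ⬝ᵥ x := by
  rw [dotProduct_sub, dotProduct_smul]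
  simp [dotProduct, hw]

section Expectation

variable {ι Ω : Type*} [Fintype ι] [MeasurableSpace Ω] {P : Measure Ω} {Y : Ω → ι → ℝ}

theorem dotProduct_sq_eq_sum_sum (w y : ι → ℝ) :
    (w ⬝ᵥ y) ^ 2 = ∑ j, ∑ k, w j * w k * (y j * y k) := by
  simp_rw [sq, dotProduct, Finset.sum_mul_sum, mul_mul_mul_comm]

theorem integrable_dotProduct_sq (hY : ∀ j k, Integrable (fun ω => Y ω j * Y ω k) P)
    (w : ι → ℝ) : Integrable (fun ω => (w ⬝ᵥ Y ω) ^ 2) P := by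
  simp_rw [dotProduct_sq_eq_sum_sum]
  exact integrable_finsetSum _ fun j _ => integrable_finsetSum _ fun k _ =>
    (hY j k).const_mul _

theorem integral_dotProduct_sq_of_uncorrelated [DecidableEq ι] {d : ι → ℝ}
    (hY : ∀ j k, Integrable (fun ω => Y ω j * Y ω k) P)
    (hcov : ∀ j k, ∫ ω, Y ω j * Y ω k ∂P = if j = k then d j else 0) (w : ι → ℝ) :
    ∫ ω, (w ⬝ᵥ Y ω) ^ 2 ∂P = ∑ j, w j ^ 2 * d j := by
  simp_rw [dotProduct_sq_eq_sum_sum]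
  rw [integral_finsetSum _ fun j _ => integrable_finsetSum _ fun k _ => (hY j k).const_mul _]
  refine Finset.sum_congr rfl fun j _ => ?_
  rw [integral_finsetSum _ fun k _ => (hY j k).const_mul _]
  simp [integral_const_mul, hcov, sq, mul_assoc]

theorem integral_sum_mul_sq_dotProduct_sub_smul_one [DecidableEq ι] {d : ι → ℝ}
    {X : Ω → ι → ℝ} {μm : ℝ}
    (hXcovint : ∀ j k, Integrable (fun ω => (X ω j - μm) * (X ω k - μm)) P)
    (hXcov : ∀ j k, ∫ ω, (X ω j - μm) * (X ω k - μm) ∂P = if j = k then d j else 0)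
    {S : Finset ι} {v : ι → ι → ℝ} (hv : ∀ i ∈ S, ∑ j, v i j = 0) (c : ι → ℝ) (m : Ω → ℝ) :
    ∫ ω, ∑ i ∈ S, c i * (v i ⬝ᵥ (X ω - m ω • fun _ => (1 : ℝ))) ^ 2 ∂P
      = ∑ i ∈ S, c i * ∑ j, v i j ^ 2 * d j := by
  set Y : Ω → ι → ℝ := fun ω j => X ω j - μm
  have hcentered (ω : Ω) {i : ι} (hi : i ∈ S) :
      v i ⬝ᵥ (X ω - m ω • fun _ => (1 : ℝ)) = v i ⬝ᵥ Y ω := by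
    rw [dotProduct_sub_smul_one_of_sum_eq_zero (hv i hi),
      ← dotProduct_sub_smul_one_of_sum_eq_zero (hv i hi) (X ω) μm]
    congr 1
    ext j
    simp [Y]
  rw [integral_congr_ae (Filter.Eventually.of_forall fun ω =>
      Finset.sum_congr rfl fun i hi => by rw [hcentered ω hi]),
    integral_finsetSum _ fun i _ => (integrable_dotProduct_sq hXcovint (v i)).const_mul _]
  refine Finset.sum_congr rfl fun i _ => ?_
  rw [integral_const_mul, integral_dotProduct_sq_of_uncorrelated hXcovint hXcov]

end Expectation

theorem one_sub_one_div_one_add_le {a b : ℝ} (ha : 0 < a) (hab : a ≤ b) :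
    1 - 1 / (1 + a) ≤ 1 / (1 + 1 / b) := by
  have hb : 0 < b := ha.trans_le hab
  rw [show 1 - 1 / (1 + a) = a / (1 + a) by field_simp; ring,
    show 1 / (1 + 1 / b) = b / (1 + b) by field_simp; ring,
    div_le_div_iff₀ (by positivity) (by positivity)]
  nlinarith

theorem one_sub_one_div_one_add_nonneg {a : ℝ} (ha : 0 ≤ a) : 0 ≤ 1 - 1 / (1 + a) := by
  rw [sub_nonneg, div_le_one (by positivity)]
  linarith

section Spectrum

variable {n : ℕ} [NeZero n]

theorem sum_erase_zero_sq_apply {v : Fin n → Fin n → ℝ}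
    (horth : ∀ i j, v i ⬝ᵥ v j = if i = j then (1 : ℝ) else 0)
    (hv0 : v 0 = fun _ => 1 / Real.sqrt n) (j : Fin n) :
    ∑ i ∈ Finset.univ.erase 0, v i j ^ 2 = 1 - 1 / n := by
  have hcol : ∑ i, v i j ^ 2 = 1 := by
    simpa [sq] using sum_mul_of_orthonormal_rows horth j j
  have hv0j : v 0 j ^ 2 = 1 / n := by
    simp [hv0, Real.sq_sqrt (Nat.cast_nonneg n)]
  rw [← Finset.sum_erase_add _ _ (Finset.mem_univ 0), hv0j] at hcol
  linarith

theorem sum_erase_zero_sum_sq_mul {v : Fin n → Fin n → ℝ}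
    (horth : ∀ i j, v i ⬝ᵥ v j = if i = j then (1 : ℝ) else 0)
    (hv0 : v 0 = fun _ => 1 / Real.sqrt n) (t : Fin n → ℝ) :
    ∑ i ∈ Finset.univ.erase 0, ∑ j, v i j ^ 2 * t j = (n - 1) * ((∑ j, t j) / n) := by
  have hn : (n : ℝ) ≠ 0 := NeZero.ne _
  rw [Finset.sum_comm]
  simp_rw [← Finset.sum_mul, sum_erase_zero_sq_apply horth hv0, ← Finset.mul_sum]
  field_simp

theorem sum_apply_eq_zero_of_ne_zero {v : Fin n → Fin n → ℝ}
    (horth : ∀ i j, v i ⬝ᵥ v j = if i = j then (1 : ℝ) else 0)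
    (hv0 : v 0 = fun _ => 1 / Real.sqrt n) {i : Fin n} (hi : i ≠ 0) : ∑ j, v i j = 0 := by
  refine sum_eq_zero_of_dotProduct_const_eq_zero ?_ (hv0 ▸ (horth i 0).trans (if_neg hi))
  have : (0 : ℝ) < n := Nat.cast_pos.mpr (Nat.pos_of_neZero n)
  positivity

theorem sum_erase_zero_one_sub_one_div_one_add_sq_mul_le {v : Fin n → Fin n → ℝ}
    (horth : ∀ i j, v i ⬝ᵥ v j = if i = j then (1 : ℝ) else 0)
    (hv0 : v 0 = fun _ => 1 / Real.sqrt n) {ev : Fin n → ℝ} (hpos : ∀ i ≠ 0, 0 < ev i)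
    {evMax : ℝ} (hmax : ∀ i, ev i ≤ evMax) {α : ℝ} (hα : 0 < α)
    {t : Fin n → ℝ} (ht : ∀ j, 0 ≤ t j) :
    ∑ i ∈ Finset.univ.erase 0, (1 - 1 / (1 + α * ev i)) ^ 2 * ∑ j, v i j ^ 2 * t j
      ≤ (1 / (1 + 1 / (α * evMax))) ^ 2 * ((n - 1) * ((∑ j, t j) / n)) := by
  rw [← sum_erase_zero_sum_sq_mul horth hv0, Finset.mul_sum]
  refine Finset.sum_le_sum fun i hi => ?_
  have hevi : 0 < ev i := hpos i (Finset.ne_of_mem_erase hi)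
  have : 0 ≤ ∑ j, v i j ^ 2 * t j := Finset.sum_nonneg fun j _ => mul_nonneg (sq_nonneg _) (ht j)
  gcongr
  · exact one_sub_one_div_one_add_nonneg (by positivity)
  · exact one_sub_one_div_one_add_le (by positivity) (by gcongr; exact hmax i)

theorem sum_one_div_one_add_sq_mul_le {ev : Fin n → ℝ} (hev0 : ev 0 = 0) (hmono : Monotone ev)
    {α : ℝ} (hα : 0 ≤ α) (σ : Fin n → ℝ) :
    ∑ i, (1 / (1 + α * ev i)) ^ 2 * σ i ^ 2
      ≤ (1 / (1 + α * ev 1)) ^ 2 * ∑ i ∈ Finset.univ.erase 0, σ i ^ 2 + σ 0 ^ 2 := by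
  rw [← Finset.sum_erase_add _ _ (Finset.mem_univ 0), hev0, Finset.mul_sum]
  simp only [mul_zero, add_zero, div_one, one_pow, one_mul]
  have hev_nonneg (i : Fin n) : 0 ≤ ev i := hev0 ▸ hmono (Fin.zero_le i)
  gcongr with i hi
  · have := hev_nonneg i
    positivity
  · have := hev_nonneg 1
    positivity
  · exact hmono (Fin.one_le_of_ne_zero (Finset.ne_of_mem_erase hi))

end Spectrum

/-- MSE-UB bound for random graph signals `x*` with mean `μ·1ₙ` and
covariance `diag(s₁², …, sₙ²)`: the expected MSE is at most
`(1/(1 + 1/(αλₙ)))²(n−1)s̄ + (1/(1 + αλ₂))²(n−1)σ̄ + σ₁²`, independent of `μ`. -/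
theorem stmt_19 (n : ℕ) [NeZero n] (hn : 2 ≤ n)
    (ev : Fin n → ℝ) (v : Fin n → Fin n → ℝ)
    (hev0 : ev 0 = 0) (hmono : Monotone ev) (hev1 : 0 < ev 1)
    (horth : ∀ i j, v i ⬝ᵥ v j = if i = j then (1 : ℝ) else 0)
    (hv0 : v 0 = fun _ => 1 / Real.sqrt n)
    (α : ℝ) (hα : 0 < α)
    (σ : Fin n → ℝ)
    {Ω : Type*} [MeasurableSpace Ω] (P : Measure Ω)
    (X : Ω → Fin n → ℝ) (μm : ℝ) (s : Fin n → ℝ)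
    (hXcovint : ∀ j k, Integrable (fun ω => (X ω j - μm) * (X ω k - μm)) P)
    (hXcov : ∀ j k, (∫ ω, (X ω j - μm) * (X ω k - μm) ∂P)
      = if j = k then s j ^ 2 else 0) :
    (∫ ω, ∑ i ∈ Finset.univ.erase 0,
        (1 - 1 / (1 + α * ev i)) ^ 2 *
          (v i ⬝ᵥ (X ω - ((∑ j, X ω j) / (n : ℝ)) • fun _ => (1 : ℝ))) ^ 2 ∂P)
      + ∑ i, (1 / (1 + α * ev i)) ^ 2 * σ i ^ 2
    ≤ (1 / (1 + 1 / (α * ev ⟨n - 1, by omega⟩))) ^ 2 *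
        (((n : ℝ) - 1) * ((∑ j, s j ^ 2) / (n : ℝ)))
      + (1 / (1 + α * ev 1)) ^ 2 *
        (((n : ℝ) - 1) * ((∑ i ∈ Finset.univ.erase 0, σ i ^ 2) / ((n : ℝ) - 1)))
      + σ 0 ^ 2 := by
  have hpos (i : Fin n) (hi : i ≠ 0) : 0 < ev i := hev1.trans_le (hmono (Fin.one_le_of_ne_zero hi))
  have hmax (i : Fin n) : ev i ≤ ev ⟨n - 1, by omega⟩ :=
    hmono (Fin.le_iff_val_le_val.2 (Nat.le_sub_one_of_lt i.2))
  have hn1 : (n : ℝ) - 1 ≠ 0 := by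
    have : (2 : ℝ) ≤ n := by exact_mod_cast hn
    linarith
  rw [integral_sum_mul_sq_dotProduct_sub_smul_one hXcovint hXcov
      (fun i hi => sum_apply_eq_zero_of_ne_zero horth hv0 (Finset.ne_of_mem_erase hi)) _
      (fun ω => (∑ j, X ω j) / (n : ℝ)),
    mul_div_cancel₀ _ hn1]
  have hsignal := sum_erase_zero_one_sub_one_div_one_add_sq_mul_le horth hv0 hpos hmax hα
    (t := fun j => s j ^ 2) fun j => sq_nonneg _
  have hnoise := sum_one_div_one_add_sq_mul_le hev0 hmono hα.le σ
  linarith
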